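/- (Gentle measurement) Let ρ be a density operator on a finite-dimensional Hilbert space and Π a projector with Tr(Πρ) ≥ 1 − δ for some δ ∈ [0,1]. Let ρ' = ΠρΠ / Tr(Πρ) be the post-measurement state on outcome Π. Then the trace distance satisfies TD(ρ, ρ') ≤ 2√δ. -/

import Mathlib

/-!
For a Hermitian `H`, `∑ |λᵢ| = Tr (H S)` for the unitary `S = sign H`, so it suffices to bound
`‖Tr ((ρ - ρ') S)‖` for every unitary `S`. With `p = Tr (P ρ)` and `E = 1 - P`, write
`ρ - ρ' = E ρ + P ρ E + (P ρ P - p⁻¹ P ρ P)`. Cauchy–Schwarz for the semi-inner product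
`Tr (A ρ Bᴴ)` bounds each of the first two terms by `√(1 - p)`, and the last one is at most
`1 - p`. Hence the trace distance is at most `√(1 - p) + (1 - p) / 2 ≤ 2 √δ`.
-/

open Finset ComplexOrder

namespace Matrix

theorem trace_mul_mul_conjTranspose_of_isStarProjection {n R : Type*} [Fintype n]
    [CommSemiring R] [StarRing R] {P : Matrix n n R} (hP : IsStarProjection P)
    (M : Matrix n n R) : (P * M * Pᴴ).trace = (P * M).trace := by
  rw [← star_eq_conjTranspose, hP.isSelfAdjoint.star_eq, trace_mul_cycle,
    hP.isIdempotentElem.eq]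

variable {n 𝕜 : Type*} [Fintype n] [RCLike 𝕜]

/-- The post-measurement state `ρ'`; it is `0` when `Tr (P ρ) = 0`, since `0⁻¹ = 0`. -/
noncomputable def postMeasurementState (P ρ : Matrix n n 𝕜) : Matrix n n 𝕜 :=
  (P * ρ).trace⁻¹ • (P * ρ * P)

theorem trace_conjTranspose_mul_mul_of_mem_unitary [DecidableEq n] {S : Matrix n n 𝕜}
    (hS : S ∈ unitary (Matrix n n 𝕜)) (M : Matrix n n 𝕜) : (Sᴴ * M * S).trace = M.trace := by
  rw [trace_mul_cycle, ← star_eq_conjTranspose, Unitary.mul_star_self_of_mem hS, one_mul]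

theorem IsHermitian.exists_mem_unitary_trace_mul_eq_sum_abs_eigenvalues [DecidableEq n]
    {H : Matrix n n 𝕜} (hH : H.IsHermitian) :
    ∃ S ∈ unitary (Matrix n n 𝕜), (H * S).trace = ((∑ i, |hH.eigenvalues i| : ℝ) : 𝕜) := by
  let s : n → 𝕜 := fun i ↦ if 0 ≤ hH.eigenvalues i then 1 else -1
  have hs : ∀ i, star (s i) * s i = 1 := fun i ↦ by
    by_cases h : 0 ≤ hH.eigenvalues i <;> simp [s, h]
  have hD : diagonal s ∈ unitary (Matrix n n 𝕜) := by
    simp only [Unitary.mem_iff, star_eq_conjTranspose, diagonal_conjTranspose,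
      diagonal_mul_diagonal, Pi.star_apply, hs, mul_comm (s _), diagonal_one, and_self]
  set U := hH.eigenvectorUnitary
  have hHS : H * Unitary.conjStarAlgAut 𝕜 _ U (diagonal s) =
      Unitary.conjStarAlgAut 𝕜 _ U (diagonal (RCLike.ofReal ∘ hH.eigenvalues) * diagonal s) := by
    rw [map_mul, ← hH.spectral_theorem]
  refine ⟨Unitary.conjStarAlgAut 𝕜 _ U (diagonal s), ?_, ?_⟩
  · rw [Unitary.conjStarAlgAut_apply]
    exact mul_mem (mul_mem U.2 hD) (Unitary.star_mem U.2)
  · rw [hHS, diagonal_mul_diagonal, Unitary.conjStarAlgAut_apply, trace_mul_cycle,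
      Unitary.coe_star_mul_self, one_mul, trace_diagonal, RCLike.ofReal_sum]
    refine sum_congr rfl fun i _ ↦ ?_
    by_cases h : 0 ≤ hH.eigenvalues i
    · simp [s, h, abs_of_nonneg h]
    · simp [s, h, abs_of_neg (not_le.mp h)]

namespace PosSemidef

variable {ρ : Matrix n n 𝕜}

theorem re_trace_mul_nonneg_of_isStarProjection (hρ : ρ.PosSemidef) {P : Matrix n n 𝕜}
    (hP : IsStarProjection P) : 0 ≤ RCLike.re (P * ρ).trace := by
  rw [← trace_mul_mul_conjTranspose_of_isStarProjection hP]
  exact (RCLike.nonneg_iff.mp (hρ.mul_mul_conjTranspose_same P).trace_nonneg).1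

theorem re_trace_mul_le_of_isStarProjection [DecidableEq n] (hρ : ρ.PosSemidef)
    {P : Matrix n n 𝕜} (hP : IsStarProjection P) :
    RCLike.re (P * ρ).trace ≤ RCLike.re ρ.trace := by
  have h := hρ.re_trace_mul_nonneg_of_isStarProjection hP.one_sub
  rwa [sub_mul, one_mul, trace_sub, map_sub, sub_nonneg] at h

/-- Cauchy–Schwarz for the semi-inner product `⟪B, A⟫ = Tr (A ρ Bᴴ)` induced by `ρ`. -/
theorem norm_trace_mul_mul_conjTranspose_le (hρ : ρ.PosSemidef) (A B : Matrix n n 𝕜) :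
    ‖(A * ρ * Bᴴ).trace‖ ≤
      √(RCLike.re (A * ρ * Aᴴ).trace) * √(RCLike.re (B * ρ * Bᴴ).trace) := by
  let := ρ.toMatrixSeminormedAddCommGroup hρ
  let := ρ.toMatrixInnerProductSpace hρ
  have h : ‖inner 𝕜 B A‖ ≤ ‖A‖ * ‖B‖ := (norm_inner_le_norm _ _).trans_eq (mul_comm _ _)
  rwa [norm_eq_sqrt_re_inner (𝕜 := 𝕜) A, norm_eq_sqrt_re_inner (𝕜 := 𝕜) B] at h

theorem norm_trace_mul_le_of_mem_unitary [DecidableEq n] (hρ : ρ.PosSemidef)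
    {S : Matrix n n 𝕜} (hS : S ∈ unitary (Matrix n n 𝕜)) :
    ‖(ρ * S).trace‖ ≤ RCLike.re ρ.trace := by
  have h := hρ.norm_trace_mul_mul_conjTranspose_le 1 Sᴴ
  rw [conjTranspose_conjTranspose, trace_conjTranspose_mul_mul_of_mem_unitary hS, one_mul,
    conjTranspose_one, mul_one, ← sq, Real.sq_sqrt (RCLike.nonneg_iff.mp hρ.trace_nonneg).1] at h
  exact h

theorem norm_trace_sub_inv_trace_smul_mul_le [DecidableEq n] (hρ : ρ.PosSemidef)
    {S : Matrix n n 𝕜} (hS : S ∈ unitary (Matrix n n 𝕜)) :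
    ‖((ρ - ρ.trace⁻¹ • ρ) * S).trace‖ ≤ |1 - RCLike.re ρ.trace| := by
  have hρS := hρ.norm_trace_mul_le_of_mem_unitary hS
  obtain ⟨t, ht0, ht⟩ := RCLike.nonneg_iff_exists_ofReal.mp hρ.trace_nonneg
  rw [← ht, RCLike.ofReal_re] at hρS ⊢
  have hnorm : ‖1 - (t : 𝕜)⁻¹‖ = |1 - t⁻¹| := by
    rw [← RCLike.ofReal_inv, ← RCLike.ofReal_one, ← RCLike.ofReal_sub, RCLike.norm_ofReal]
  have hsplit : (ρ - (t : 𝕜)⁻¹ • ρ) * S = (1 - (t : 𝕜)⁻¹) • (ρ * S) := by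
    rw [sub_smul, one_smul, sub_mul, smul_mul_assoc]
  rw [hsplit, trace_smul, norm_smul, hnorm]
  calc |1 - t⁻¹| * ‖(ρ * S).trace‖ ≤ |1 - t⁻¹| * t := by gcongr
    _ ≤ |1 - t| := by
      rcases ht0.eq_or_lt with rfl | ht_pos
      · simp
      · apply le_of_eq
        calc |1 - t⁻¹| * t = |(1 - t⁻¹) * t| := by rw [abs_mul, abs_of_pos ht_pos]
            _ = |1 - t| := by rw [sub_mul, one_mul, inv_mul_cancel₀ ht_pos.ne', abs_sub_comm]

theorem norm_trace_sub_conj_mul_le [DecidableEq n] (hρ : ρ.PosSemidef)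
    (hρtr : ρ.trace = 1) {P S : Matrix n n 𝕜} (hP : IsStarProjection P)
    (hS : S ∈ unitary (Matrix n n 𝕜)) :
    ‖((ρ - P * ρ * P) * S).trace‖ ≤ 2 * √(1 - RCLike.re (P * ρ).trace) := by
  set p := RCLike.re (P * ρ).trace
  set E := 1 - P
  have hEH : Eᴴ = E := hP.one_sub.isSelfAdjoint.star_eq
  have hPρP : RCLike.re (P * ρ * Pᴴ).trace = p := by
    rw [trace_mul_mul_conjTranspose_of_isStarProjection hP]
  have hEρE : RCLike.re (E * ρ * Eᴴ).trace = 1 - p := by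
    rw [trace_mul_mul_conjTranspose_of_isStarProjection hP.one_sub, sub_mul, one_mul, trace_sub,
      hρtr, map_sub, RCLike.one_re]
  have hp : p ≤ 1 := by
    simpa [hρtr] using hρ.re_trace_mul_le_of_isStarProjection hP
  have hSρS : RCLike.re (Sᴴ * ρ * Sᴴᴴ).trace = 1 := by
    rw [conjTranspose_conjTranspose, trace_conjTranspose_mul_mul_of_mem_unitary hS, hρtr,
      RCLike.one_re]
  have hSEρES : RCLike.re ((Sᴴ * E) * ρ * (Sᴴ * E)ᴴ).trace = 1 - p := by
    rw [conjTranspose_mul, conjTranspose_conjTranspose,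
      show Sᴴ * E * ρ * (Eᴴ * S) = Sᴴ * (E * ρ * Eᴴ) * S by simp only [mul_assoc],
      trace_conjTranspose_mul_mul_of_mem_unitary hS, hEρE]
  have hsplit : (ρ - P * ρ * P) * S = E * ρ * Sᴴᴴ + P * ρ * (Sᴴ * E)ᴴ := by
    rw [conjTranspose_conjTranspose, conjTranspose_mul, conjTranspose_conjTranspose, hEH]
    simp only [E, sub_mul, mul_sub, one_mul, mul_assoc]
    abel
  have hsqrt_p : √p ≤ 1 := Real.sqrt_le_one.mpr hp
  calc ‖((ρ - P * ρ * P) * S).trace‖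
      ≤ ‖(E * ρ * Sᴴᴴ).trace‖ + ‖(P * ρ * (Sᴴ * E)ᴴ).trace‖ := by
        rw [hsplit, trace_add]
        exact norm_add_le _ _
    _ ≤ √(1 - p) * √1 + √p * √(1 - p) := by
        gcongr
        · simpa only [hEρE, hSρS] using hρ.norm_trace_mul_mul_conjTranspose_le E Sᴴ
        · simpa only [hPρP, hSEρES] using hρ.norm_trace_mul_mul_conjTranspose_le P (Sᴴ * E)
    _ ≤ 2 * √(1 - p) := by nlinarith [Real.sqrt_nonneg (1 - p), Real.sqrt_one]

theorem norm_trace_sub_postMeasurementState_mul_le [DecidableEq n] (hρ : ρ.PosSemidef)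
    (hρtr : ρ.trace = 1) {P S : Matrix n n 𝕜} (hP : IsStarProjection P)
    (hS : S ∈ unitary (Matrix n n 𝕜)) :
    ‖((ρ - postMeasurementState P ρ) * S).trace‖ ≤
      2 * √(1 - RCLike.re (P * ρ).trace) + (1 - RCLike.re (P * ρ).trace) := by
  have hPH : Pᴴ = P := hP.isSelfAdjoint.star_eq
  have hPρP : (P * ρ * P).PosSemidef := by
    simpa only [hPH] using hρ.mul_mul_conjTranspose_same P
  have htr : (P * ρ * P).trace = (P * ρ).trace := by
    simpa only [hPH] using trace_mul_mul_conjTranspose_of_isStarProjection hP ρ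
  have hsplit : ρ - postMeasurementState P ρ =
      (ρ - P * ρ * P) + (P * ρ * P - (P * ρ * P).trace⁻¹ • (P * ρ * P)) := by
    rw [postMeasurementState, htr]
    abel
  calc ‖((ρ - postMeasurementState P ρ) * S).trace‖
      ≤ ‖((ρ - P * ρ * P) * S).trace‖
          + ‖((P * ρ * P - (P * ρ * P).trace⁻¹ • (P * ρ * P)) * S).trace‖ := by
        rw [hsplit, add_mul, trace_add]
        exact norm_add_le _ _
    _ ≤ 2 * √(1 - RCLike.re (P * ρ).trace) + |1 - RCLike.re (P * ρ * P).trace| :=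
        add_le_add (hρ.norm_trace_sub_conj_mul_le hρtr hP hS)
          (hPρP.norm_trace_sub_inv_trace_smul_mul_le hS)
    _ = 2 * √(1 - RCLike.re (P * ρ).trace) + (1 - RCLike.re (P * ρ).trace) := by
        rw [htr, abs_of_nonneg (sub_nonneg.mpr ?_)]
        simpa [hρtr] using hρ.re_trace_mul_le_of_isStarProjection hP

end PosSemidef

end Matrix

theorem stmt_3_general {n : ℕ} (ρ P : Matrix (Fin n) (Fin n) ℂ) (δ : ℝ)
    (hρ : ρ.PosSemidef) (hρtr : ρ.trace = 1)
    (hP : P.IsHermitian) (hP2 : P * P = P)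
    (htr : 1 - δ ≤ (P * ρ).trace.re)
    (ρ' : Matrix (Fin n) (Fin n) ℂ)
    (hρ' : ρ' = ((P * ρ).trace)⁻¹ • (P * ρ * P))
    (hH : (ρ - ρ').IsHermitian) :
    (1 / 2) * ∑ i, |hH.eigenvalues i| ≤ 2 * Real.sqrt δ := by
  set p := (P * ρ).trace.re
  have hPproj : IsStarProjection P := ⟨hP2, hP⟩
  have hp0 : 0 ≤ p := hρ.re_trace_mul_nonneg_of_isStarProjection hPproj
  obtain ⟨S, hS, hHS⟩ := hH.exists_mem_unitary_trace_mul_eq_sum_abs_eigenvalues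
  have hsum : ∑ i, |hH.eigenvalues i| ≤ 2 * √(1 - p) + (1 - p) :=
    calc ∑ i, |hH.eigenvalues i| = ((ρ - ρ') * S).trace.re := by
          rw [hHS]; exact (RCLike.ofReal_re (K := ℂ) _).symm
      _ ≤ ‖((ρ - ρ') * S).trace‖ := Complex.re_le_norm _
      _ ≤ 2 * √(1 - p) + (1 - p) := by
          rw [hρ']
          exact hρ.norm_trace_sub_postMeasurementState_mul_le hρtr hPproj hS
  have hδ : √(1 - p) ≤ √δ := Real.sqrt_le_sqrt (by linarith)
  have hle_sqrt : 1 - p ≤ √(1 - p) := Real.le_sqrt_self_iff.mpr (by linarith)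
  nlinarith [Real.sqrt_nonneg (1 - p)]

/-- Gentle measurement: if `Tr(Pρ) ≥ 1 − δ` for a projector `P` and a density operator `ρ`,
then the trace distance between `ρ` and the post-measurement state
`ρ' = PρP / Tr(Pρ)` is at most `2√δ`.  The trace distance is expressed as half the sum of
the absolute values of the eigenvalues of the Hermitian matrix `ρ − ρ'`. -/
theorem stmt_3 {n : ℕ} (ρ P : Matrix (Fin n) (Fin n) ℂ) (δ : ℝ)
    (hδ0 : 0 ≤ δ) (hδ1 : δ ≤ 1)
    (hρ : ρ.PosSemidef) (hρtr : ρ.trace = 1)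
    (hP : P.IsHermitian) (hP2 : P * P = P)
    (htr : 1 - δ ≤ (P * ρ).trace.re)
    (ρ' : Matrix (Fin n) (Fin n) ℂ)
    (hρ' : ρ' = ((P * ρ).trace)⁻¹ • (P * ρ * P))
    (hH : (ρ - ρ').IsHermitian) :
    (1 / 2) * ∑ i, |hH.eigenvalues i| ≤ 2 * Real.sqrt δ :=
  stmt_3_general ρ P δ hρ hρtr hP hP2 htr ρ' hρ' hH
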